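/- arXiv:2005.04763 — 2 statements merged into one kernel-verified Lean document; each statement's English description precedes it below -/
import Mathlib

section
/- Let T ≥ 2 be an integer, ℓ = ⌈log₂ T⌉, T_i = T - ⌈T·2^{-i}⌉ for 0 ≤ i ≤ ℓ, and T_{ℓ+1} = T. Fix c > 0 and for T_i < t ≤ T_{i+1} set η_t = c·2^{-i}/√T. Then for every t with 1 ≤ t ≤ T-1, letting i be the index with T_i < t ≤ T_{i+1}, we have c·(T-t)/T^{3/2} ≤ η_t ≤ 2c·(T-t)/T^{3/2}. -/
/-- Bounds on the Jain–Nagaraj–Netrapalli step-size schedule: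
for `1 ≤ t ≤ T-1` in phase `i` (i.e. `T_i < t ≤ T_{i+1}`),
`c(T-t)/T^{3/2} ≤ η_t ≤ 2c(T-t)/T^{3/2}`. -/
theorem jnn_step_size_bounds (T : ℕ) (hT : 2 ≤ T) (c : ℝ) (hc : 0 < c)
    (ℓ : ℕ) (hℓ : (ℓ : ℝ) = ⌈Real.logb 2 T⌉)
    (Tseq : ℕ → ℕ)
    (hTseq : ∀ i ≤ ℓ, Tseq i = T - ⌈(T : ℝ) * 2 ^ (-(i : ℤ))⌉₊)
    (hTlast : Tseq (ℓ + 1) = T)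
    (η : ℕ → ℝ)
    (hη : ∀ i ≤ ℓ, ∀ t, Tseq i < t → t ≤ Tseq (i + 1) →
      η t = c * 2 ^ (-(i : ℤ)) / Real.sqrt T) :
    ∀ t, 1 ≤ t → t ≤ T - 1 →
      ∀ i ≤ ℓ, Tseq i < t → t ≤ Tseq (i + 1) →
        c * ((T : ℝ) - t) / (T : ℝ) ^ ((3 : ℝ) / 2) ≤ η t ∧
        η t ≤ 2 * c * ((T : ℝ) - t) / (T : ℝ) ^ ((3 : ℝ) / 2) := by
  intro t ht1 ht2 i hi hlt hle
  have hT0 : (0 : ℝ) < T := by positivity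
  have htT : t ≤ T := le_trans ht2 (Nat.sub_le T 1)
  have hcast : ((T - t : ℕ) : ℝ) = (T : ℝ) - t := by
    push_cast [Nat.cast_sub htT]; ring
  set x : ℝ := (T : ℝ) * 2 ^ (-(i : ℤ)) with hx
  have hx0 : 0 < x := by positivity
  have hηt : η t = c * 2 ^ (-(i : ℤ)) / Real.sqrt T := hη i hi t hlt hle
  -- upper bound on T - t
  have hub : (T : ℝ) - t < x := by
    have hnat : T - t < ⌈x⌉₊ := by
      have h1 := hTseq i hi
      rw [← hx] at h1
      omega
    have h2 := Nat.lt_ceil.mp hnat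
    linarith [hcast ▸ h2]
  -- lower bound on T - t
  have hlb : x ≤ 2 * ((T : ℝ) - t) := by
    have hhalf : (2 : ℝ) ^ (-((i : ℤ) + 1)) = 2 ^ (-(i : ℤ)) / 2 := by
      rw [show -((i : ℤ) + 1) = -(i : ℤ) + (-1) by ring, zpow_add₀ (two_ne_zero),
        zpow_neg_one]
      ring
    rcases lt_or_eq_of_le hi with h | h
    · -- i + 1 ≤ ℓ
      have h1 := hTseq (i + 1) h
      set y : ℝ := (T : ℝ) * 2 ^ (-((i : ℕ) + 1 : ℕ) : ℤ) with hy
      have hy2 : y = x / 2 := by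
        rw [hy, hx]
        push_cast
        rw [hhalf]; ring
      have hxT : x ≤ (T : ℝ) := by
        rw [hx]
        have h2 : (2 : ℝ) ^ (-(i : ℤ)) ≤ 1 := by
          rw [zpow_neg]
          exact inv_le_one_of_one_le₀ (one_le_zpow₀ one_le_two (Int.ofNat_nonneg i))
        nlinarith
      have hyle : y ≤ (T : ℝ) := by rw [hy2]; linarith
      have hceil_le : ⌈y⌉₊ ≤ T := Nat.ceil_le.mpr hyle
      have hnat : ⌈y⌉₊ ≤ T - t := by omega
      have h3 : y ≤ ((T - t : ℕ) : ℝ) := le_trans (Nat.le_ceil _) (by exact_mod_cast hnat)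
      rw [hcast] at h3
      rw [hy2] at h3
      linarith
    · -- i = ℓ
      have hlog : Real.logb 2 (T : ℝ) ≤ (ℓ : ℝ) := by
        rw [hℓ]; exact Int.le_ceil _
      have hTle : (T : ℝ) ≤ (2 : ℝ) ^ (ℓ : ℝ) :=
        ((Real.logb_le_iff_le_rpow one_lt_two hT0).mp hlog)
      have hrw : (2 : ℝ) ^ (ℓ : ℝ) = (2 : ℝ) ^ (ℓ : ℤ) := by
        rw [← Real.rpow_intCast]; norm_num
      have hx1 : x ≤ 1 := by
        rw [hx, h]
        have h2pos : (0 : ℝ) < (2 : ℝ) ^ ((ℓ : ℕ) : ℤ) := by positivity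
        rw [hrw] at hTle
        rw [zpow_neg, mul_inv_le_iff₀ h2pos, one_mul]
        exact hTle
      have h1T : (1 : ℝ) ≤ (T : ℝ) - t := by
        have : t + 1 ≤ T := by omega
        have : ((t : ℝ) + 1) ≤ (T : ℝ) := by exact_mod_cast this
        linarith
      linarith
  -- rewrite T^(3/2)
  have hs : 0 < Real.sqrt T := Real.sqrt_pos.mpr hT0
  have h32 : (T : ℝ) ^ ((3 : ℝ) / 2) = (T : ℝ) * Real.sqrt T := by
    rw [Real.sqrt_eq_rpow, show (3 : ℝ) / 2 = 1 + 1 / 2 by ring, Real.rpow_add hT0,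
      Real.rpow_one]
  have hηx : η t = c * x / ((T : ℝ) * Real.sqrt T) := by
    rw [hηt, hx]
    field_simp
  constructor
  · rw [h32, hηx]
    gcongr
  · rw [h32, hηx]
    rw [div_le_div_iff₀ (by positivity) (by positivity)]
    have hTt : 0 ≤ (T : ℝ) - t := by nlinarith
    nlinarith [mul_pos hT0 hs, mul_le_mul_of_nonneg_right hlb (le_of_lt (mul_pos hT0 hs))]
end

section
/- Let F : K → ℝ be λ-strongly convex with minimizer w* over closed convex K ⊆ ℝ^d, let 0 < η ≤ 1/(2λ), and suppose points w_1, ..., w_{T+1} ∈ K satisfy, for all t, F(w_t) - F(w*) ≤ (1/(2η))(D_t² - D_{t+1}²) - (λ/2)D_t² + (η/2)L², where D_t = ‖w_t - w*‖₂ (the deterministic PSGD descent inequality with bounded gradients). Then with weights γ_t = (1-ηλ)^{-t}, (∑_{t=1}^T γ_t)^{-1} ∑_{t=1}^T γ_t (F(w_t) - F(w*)) ≤ λ·D_1²/(e^{ηλT} - 1) + (L²/2)η. -/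
set_option maxHeartbeats 1000000 in
/-- Fixed step-size weighted-average convergence bound for strongly convex SGD
(deterministic version). -/
theorem fixed_step_weighted_bound {d : ℕ} (K : Set (EuclideanSpace ℝ (Fin d)))
    (hKconv : Convex ℝ K) (hKcl : IsClosed K)
    (F : EuclideanSpace ℝ (Fin d) → ℝ) (lam L η : ℝ) (hlam : 0 < lam) (hL : 0 < L)
    (hF : StrongConvexOn K lam F)
    (wstar : EuclideanSpace ℝ (Fin d)) (hwstar : wstar ∈ K) (hmin : ∀ w ∈ K, F wstar ≤ F w)
    (hη0 : 0 < η) (hη : η ≤ 1 / (2 * lam))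
    (T : ℕ) (hT : 1 ≤ T)
    (w : ℕ → EuclideanSpace ℝ (Fin d)) (hw : ∀ t ∈ Finset.Icc 1 T, w t ∈ K)
    (hdesc : ∀ t ∈ Finset.Icc 1 T,
      F (w t) - F wstar ≤
        (1 / (2 * η)) * (‖w t - wstar‖ ^ 2 - ‖w (t + 1) - wstar‖ ^ 2)
          - (lam / 2) * ‖w t - wstar‖ ^ 2 + (η / 2) * L ^ 2)
    (γ : ℕ → ℝ) (hγ : ∀ t, γ t = (1 - η * lam) ^ (-(t : ℤ))) :
    (∑ t ∈ Finset.Icc 1 T, γ t)⁻¹ * ∑ t ∈ Finset.Icc 1 T, γ t * (F (w t) - F wstar)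
      ≤ lam * ‖w 1 - wstar‖ ^ 2 / (Real.exp (η * lam * T) - 1) + (L ^ 2 / 2) * η := by
  set a : ℝ := η * lam with ha
  have ha0 : 0 < a := mul_pos hη0 hlam
  have ha2 : a ≤ 1 / 2 := by
    have := mul_le_mul_of_nonneg_right hη hlam.le
    rw [ha]
    calc η * lam ≤ 1 / (2 * lam) * lam := this
      _ = 1 / 2 := by field_simp
  set q : ℝ := 1 - a with hqdef
  have hq0 : 0 < q := by rw [hqdef]; linarith
  have hq1 : q < 1 := by rw [hqdef]; linarith
  have hγpos : ∀ t, 0 < γ t := fun t => by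
    rw [hγ]; exact zpow_pos hq0 _
  have hγrec : ∀ i : ℕ, γ i = γ (i + 1) * q := by
    intro i
    rw [hγ, hγ]
    have h : (-(↑(i + 1) : ℤ)) = (-(i : ℤ)) + (-1) := by push_cast; ring
    rw [h, zpow_add₀ hq0.ne', zpow_neg_one]
    field_simp
  set S : ℝ := ∑ t ∈ Finset.Icc 1 T, γ t with hS
  have hSpos : 0 < S :=
    Finset.sum_pos (fun t _ => hγpos t) (Finset.nonempty_Icc.2 hT)
  -- abbreviation for distances
  set D : ℕ → ℝ := fun t => ‖w t - wstar‖ with hD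
  set f : ℕ → ℝ := fun i => γ i * D (i + 1) ^ 2 with hf
  -- Step 1: weighted sum bound via telescoping
  have key : ∑ t ∈ Finset.Icc 1 T, γ t * (F (w t) - F wstar)
      ≤ (1 / (2 * η)) * D 1 ^ 2 + S * ((η / 2) * L ^ 2) := by
    have hrw : ∀ g : ℕ → ℝ, ∑ t ∈ Finset.Icc 1 T, g t = ∑ i ∈ Finset.range T, g (i + 1) := by
      intro g
      rw [← Finset.Ico_add_one_right_eq_Icc, Finset.sum_Ico_eq_sum_range]
      simp [add_comm]
    rw [hrw, hS, hrw]
    have hpt : ∀ i ∈ Finset.range T,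
        γ (i + 1) * (F (w (i + 1)) - F wstar)
          ≤ (1 / (2 * η)) * (f i - f (i + 1)) + γ (i + 1) * ((η / 2) * L ^ 2) := by
      intro i hi
      have hmem : i + 1 ∈ Finset.Icc 1 T := by
        simp only [Finset.mem_range] at hi
        simp only [Finset.mem_Icc]; omega
      have h1 := hdesc (i + 1) hmem
      have h2 := mul_le_mul_of_nonneg_left h1 (hγpos (i + 1)).le
      refine h2.trans_eq ?_
      have hrec := hγrec i
      rw [hf]
      simp only [hD]
      rw [hrec, hqdef, ha]
      field_simp
      ring
    calc ∑ i ∈ Finset.range T, γ (i + 1) * (F (w (i + 1)) - F wstar)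
        ≤ ∑ i ∈ Finset.range T, ((1 / (2 * η)) * (f i - f (i + 1)) + γ (i + 1) * ((η / 2) * L ^ 2)) :=
          Finset.sum_le_sum hpt
      _ = (1 / (2 * η)) * (f 0 - f T) + (∑ i ∈ Finset.range T, γ (i + 1)) * ((η / 2) * L ^ 2) := by
          rw [Finset.sum_add_distrib, ← Finset.mul_sum, Finset.sum_range_sub' f T, ← Finset.sum_mul]
      _ ≤ (1 / (2 * η)) * D 1 ^ 2 + (∑ i ∈ Finset.range T, γ (i + 1)) * ((η / 2) * L ^ 2) := by
          have hγ0 : γ 0 = 1 := by rw [hγ]; simp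
          have hfT : 0 ≤ f T := mul_nonneg (hγpos T).le (sq_nonneg _)
          have hf0 : f 0 = D 1 ^ 2 := by rw [hf]; simp [hγ0]
          have : (1 / (2 * η)) * (f 0 - f T) ≤ (1 / (2 * η)) * D 1 ^ 2 := by
            apply mul_le_mul_of_nonneg_left _ (by positivity)
            rw [hf0]; linarith
          linarith
  -- Step 2: lower bound on S
  have hexp : ∀ t : ℕ, Real.exp (a * t) ≤ γ t := by
    intro t
    have hqe : q ≤ Real.exp (-a) := by
      have := Real.add_one_le_exp (-a)
      rw [hqdef]; linarith
    have hpow : q ^ t ≤ Real.exp (-(a * t)) := by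
      calc q ^ t ≤ Real.exp (-a) ^ t := pow_le_pow_left₀ hq0.le hqe t
        _ = Real.exp (-(a * t)) := by
            rw [← Real.exp_nat_mul]; ring_nf
    have hqt : 0 < q ^ t := pow_pos hq0 t
    have := inv_anti₀ hqt hpow
    rw [Real.exp_neg, inv_inv] at this
    rw [hγ, zpow_neg, zpow_natCast]
    exact this
  have geom : ∀ n : ℕ, (Real.exp (a * n) - 1) / a ≤ ∑ t ∈ Finset.Icc 1 n, Real.exp (a * t) := by
    intro n
    induction n with
    | zero => simp
    | succ n ih =>
      rw [Finset.sum_Icc_succ_top (by omega)]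
      have hE : Real.exp (a * n) = Real.exp (a * (n + 1)) * Real.exp (-a) := by
        rw [← Real.exp_add]; ring_nf
      have h1 : 1 - a ≤ Real.exp (-a) := by
        have := Real.add_one_le_exp (-a); linarith
      have hEp : 0 < Real.exp (a * (n + 1)) := Real.exp_pos _
      have hstep : Real.exp (a * (n + 1)) - Real.exp (a * n) ≤ a * Real.exp (a * (n + 1)) := by
        rw [hE]; nlinarith
      have : (Real.exp (a * (n + 1)) - 1) / a - (Real.exp (a * n) - 1) / a
          ≤ Real.exp (a * (n + 1)) := by
        rw [div_sub_div_same]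
        rw [div_le_iff₀ ha0]
        nlinarith
      push_cast
      push_cast at ih
      linarith
  have hSge : (Real.exp (a * T) - 1) / a ≤ S := by
    refine (geom T).trans ?_
    exact Finset.sum_le_sum fun t _ => hexp t
  have hE1 : 1 < Real.exp (a * T) := by
    apply Real.one_lt_exp_iff.2
    have : (1 : ℝ) ≤ (T : ℝ) := by exact_mod_cast hT
    nlinarith
  have hEm1 : 0 < Real.exp (a * T) - 1 := by linarith
  -- Step 3: combine
  have hSinv : S⁻¹ ≤ a / (Real.exp (a * T) - 1) := by
    rw [← one_div]
    rw [div_le_div_iff₀ hSpos hEm1]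
    have := hSge
    rw [div_le_iff₀ ha0] at this
    linarith
  have hsum_nonneg := key
  calc S⁻¹ * ∑ t ∈ Finset.Icc 1 T, γ t * (F (w t) - F wstar)
      ≤ S⁻¹ * ((1 / (2 * η)) * D 1 ^ 2 + S * ((η / 2) * L ^ 2)) :=
        mul_le_mul_of_nonneg_left key (inv_nonneg.2 hSpos.le)
    _ = S⁻¹ * ((1 / (2 * η)) * D 1 ^ 2) + (η / 2) * L ^ 2 := by
        rw [mul_add]
        congr 1
        rw [← mul_assoc, inv_mul_cancel₀ hSpos.ne', one_mul]
    _ ≤ (a / (Real.exp (a * T) - 1)) * ((1 / (2 * η)) * D 1 ^ 2) + (η / 2) * L ^ 2 := by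
        have : 0 ≤ (1 / (2 * η)) * D 1 ^ 2 := by positivity
        nlinarith [mul_le_mul_of_nonneg_right hSinv this]
    _ ≤ lam * D 1 ^ 2 / (Real.exp (a * T) - 1) + (L ^ 2 / 2) * η := by
        have heq : (a / (Real.exp (a * T) - 1)) * ((1 / (2 * η)) * D 1 ^ 2)
            = (lam / 2) * D 1 ^ 2 / (Real.exp (a * T) - 1) := by
          rw [ha]; field_simp
        rw [heq, show (η / 2) * L ^ 2 = (L ^ 2 / 2) * η from by ring]
        have h1 : (lam / 2) * D 1 ^ 2 ≤ lam * D 1 ^ 2 := by nlinarith [sq_nonneg (D 1)]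
        have h2 := (div_le_div_iff_of_pos_right hEm1).2 h1
        linarith
end
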